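/- arXiv:1709.10003 — 2 statements merged into one kernel-verified Lean document; each statement's English description precedes it below -/
import Mathlib

section
/- For all integers m ≥ 1 and n ≥ 1, the sum, over all tuples (k₁, …, k_m) of nonnegative integers with k₁ + ⋯ + k_m = n, of the product C(2k₁,k₁) · C(2k₂,k₂) ⋯ C(2k_m,k_m), equals (4^n / n!) · Γ(n + m/2) / Γ(m/2). -/
open Finset

/-- rising factorial over ℝ -/
def ascR (x : ℝ) : ℕ → ℝ
  | 0 => 1
  | n + 1 => ascR x n * (x + n)

lemma ascR_zero (x : ℝ) : ascR x 0 = 1 := rfl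
lemma ascR_succ (x : ℝ) (n : ℕ) : ascR x (n + 1) = ascR x n * (x + n) := rfl

lemma Gamma_add_nat (x : ℝ) (hx : 0 < x) (n : ℕ) :
    Real.Gamma (x + n) = ascR x n * Real.Gamma x := by
  induction n with
  | zero => simp [ascR_zero]
  | succ n ih =>
    have h1 : x + (n + 1 : ℕ) = (x + n) + 1 := by push_cast; ring
    rw [h1, Real.Gamma_add_one (by positivity), ih, ascR_succ]
    ring

lemma central_eq (n : ℕ) : ((n.factorial : ℝ)) * ((2 * n).choose n : ℝ) = 4 ^ n * ascR (1/2) n := by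
  induction n with
  | zero => simp [ascR_zero]
  | succ n ih =>
    have h := Nat.succ_mul_centralBinom_succ n
    have h' : ((n+1 : ℕ) : ℝ) * ((2*(n+1)).choose (n+1) : ℝ) = 2 * (2*n+1) * ((2*n).choose n : ℝ) := by
      rw [← Nat.centralBinom, ← Nat.centralBinom]
      exact_mod_cast congrArg (Nat.cast : ℕ → ℝ) h
    rw [Nat.factorial_succ]
    push_cast
    push_cast at h'
    rw [ascR_succ]
    linear_combination (n.factorial : ℝ) * h' + (2*(2*(n:ℝ)+1)) * ih

lemma vander (x y : ℝ) : ∀ n : ℕ,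
    ∑ p ∈ Finset.HasAntidiagonal.antidiagonal n, ascR x p.1 / p.1.factorial * (ascR y p.2 / p.2.factorial)
      = ascR (x + y) n / n.factorial := by
  intro n
  induction n with
  | zero => simp [ascR_zero]
  | succ n ih =>
    have key : ((n:ℝ) + 1) * ∑ p ∈ Finset.HasAntidiagonal.antidiagonal (n+1),
        ascR x p.1 / p.1.factorial * (ascR y p.2 / p.2.factorial)
        = (x + y + n) * ∑ p ∈ Finset.HasAntidiagonal.antidiagonal n,
        ascR x p.1 / p.1.factorial * (ascR y p.2 / p.2.factorial) := by
      rw [Finset.mul_sum]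
      have step1 : ∀ p ∈ Finset.HasAntidiagonal.antidiagonal (n+1),
          ((n:ℝ)+1) * (ascR x p.1 / p.1.factorial * (ascR y p.2 / p.2.factorial))
          = (p.1 : ℝ) * (ascR x p.1 / p.1.factorial * (ascR y p.2 / p.2.factorial))
            + (p.2 : ℝ) * (ascR x p.1 / p.1.factorial * (ascR y p.2 / p.2.factorial)) := by
        intro p hp
        rw [Finset.HasAntidiagonal.mem_antidiagonal] at hp
        have hpc : (p.1 : ℝ) + p.2 = (n:ℝ) + 1 := by exact_mod_cast congrArg (Nat.cast (R:=ℝ)) hp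
        rw [← hpc]; ring
      rw [Finset.sum_congr rfl step1, Finset.sum_add_distrib]
      have e1 : ∑ p ∈ Finset.HasAntidiagonal.antidiagonal (n+1),
          (p.1 : ℝ) * (ascR x p.1 / p.1.factorial * (ascR y p.2 / p.2.factorial))
          = ∑ p ∈ Finset.HasAntidiagonal.antidiagonal n,
            (x + p.1) * (ascR x p.1 / p.1.factorial * (ascR y p.2 / p.2.factorial)) := by
        rw [Finset.Nat.sum_antidiagonal_succ]
        simp only [Nat.cast_zero, zero_mul, zero_add]
        refine Finset.sum_congr rfl fun p hp => ?_
        rw [ascR_succ, Nat.factorial_succ]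
        have h1 : (p.1.factorial : ℝ) ≠ 0 := by exact_mod_cast p.1.factorial_ne_zero
        push_cast
        field_simp
      have e2 : ∑ p ∈ Finset.HasAntidiagonal.antidiagonal (n+1),
          (p.2 : ℝ) * (ascR x p.1 / p.1.factorial * (ascR y p.2 / p.2.factorial))
          = ∑ p ∈ Finset.HasAntidiagonal.antidiagonal n,
            (y + p.2) * (ascR x p.1 / p.1.factorial * (ascR y p.2 / p.2.factorial)) := by
        rw [Finset.Nat.sum_antidiagonal_succ']
        simp only [Nat.cast_zero, zero_mul, zero_add]
        refine Finset.sum_congr rfl fun p hp => ?_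
        rw [ascR_succ, Nat.factorial_succ]
        have h2 : (p.2.factorial : ℝ) ≠ 0 := by exact_mod_cast p.2.factorial_ne_zero
        push_cast
        field_simp
      rw [e1, e2, ← Finset.sum_add_distrib, Finset.mul_sum]
      refine Finset.sum_congr rfl fun p hp => ?_
      rw [Finset.HasAntidiagonal.mem_antidiagonal] at hp
      have hpc : (p.1 : ℝ) + p.2 = (n:ℝ) := by exact_mod_cast congrArg (Nat.cast (R:=ℝ)) hp
      linear_combination (ascR x p.1 / p.1.factorial * (ascR y p.2 / p.2.factorial)) * hpc
    have hn1 : ((n:ℝ) + 1) ≠ 0 := by positivity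
    rw [ih] at key
    rw [ascR_succ, Nat.factorial_succ]
    have hf : (n.factorial : ℝ) ≠ 0 := by exact_mod_cast n.factorial_ne_zero
    field_simp at key ⊢
    push_cast
    linear_combination key

lemma sum_adt_succ (m n : ℕ) (f : (Fin (m+1) → ℕ) → ℝ) :
    ∑ k ∈ Finset.Nat.antidiagonalTuple (m+1) n, f k
      = ∑ p ∈ Finset.HasAntidiagonal.antidiagonal n, ∑ k ∈ Finset.Nat.antidiagonalTuple m p.2,
          f (Fin.cons p.1 k) := by
  rw [Finset.sum_sigma']
  refine Finset.sum_nbij' (i := fun k => ⟨(k 0, ∑ i, Fin.tail k i), Fin.tail k⟩)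
    (j := fun x => Fin.cons x.1.1 x.2) ?_ ?_ ?_ ?_ ?_
  · intro k hk
    simp only [Finset.Nat.mem_antidiagonalTuple] at hk
    simp only [Finset.mem_sigma, Finset.HasAntidiagonal.mem_antidiagonal, Finset.Nat.mem_antidiagonalTuple,
      and_true]
    rw [← hk, Fin.sum_univ_succ]
    rfl
  · rintro ⟨⟨a, b⟩, k⟩ hx
    simp only [Finset.mem_sigma, Finset.HasAntidiagonal.mem_antidiagonal,
      Finset.Nat.mem_antidiagonalTuple] at hx ⊢
    rw [Fin.sum_cons, hx.2, hx.1]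
  · intro k hk
    exact Fin.cons_self_tail k
  · rintro ⟨⟨a, b⟩, k⟩ hx
    simp only [Finset.mem_sigma, Finset.HasAntidiagonal.mem_antidiagonal,
      Finset.Nat.mem_antidiagonalTuple] at hx
    simp [Fin.cons_zero, Fin.tail_cons, hx.2]
  · intro k hk
    rw [Fin.cons_self_tail]

lemma key_lemma : ∀ m n : ℕ,
    ∑ k ∈ Finset.Nat.antidiagonalTuple m n, ∏ i, ((2 * k i).choose (k i) : ℝ)
      = 4 ^ n * ascR ((m : ℝ) / 2) n / n.factorial := by
  intro m
  induction m with
  | zero =>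
    intro n
    cases n with
    | zero => simp [ascR_zero]
    | succ n =>
      rw [Finset.Nat.antidiagonalTuple_zero_succ]
      have : ∀ k : ℕ, ascR (0:ℝ) (k+1) = 0 := by
        intro k
        induction k with
        | zero => simp [ascR_succ, ascR_zero]
        | succ k ih => rw [ascR_succ, ih, zero_mul]
      simp [this n]
  | succ m ih =>
    intro n
    rw [sum_adt_succ]
    have step : ∀ p ∈ Finset.HasAntidiagonal.antidiagonal n,
        ∑ k ∈ Finset.Nat.antidiagonalTuple m p.2,
          ∏ i, ((2 * (Fin.cons p.1 k : Fin (m+1) → ℕ) i).choose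
              ((Fin.cons p.1 k : Fin (m+1) → ℕ) i) : ℝ)
        = 4 ^ n * (ascR ((1:ℝ)/2) p.1 / p.1.factorial
            * (ascR ((m:ℝ)/2) p.2 / p.2.factorial)) := by
      intro p hp
      rw [Finset.HasAntidiagonal.mem_antidiagonal] at hp
      have prodeq : ∀ k : Fin m → ℕ,
          (∏ i, ((2 * (Fin.cons p.1 k : Fin (m+1) → ℕ) i).choose
              ((Fin.cons p.1 k : Fin (m+1) → ℕ) i) : ℝ))
          = ((2 * p.1).choose p.1 : ℝ) * ∏ i, ((2 * k i).choose (k i) : ℝ) := by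
        intro k
        rw [Fin.prod_univ_succ]
        simp [Fin.cons_zero, Fin.cons_succ]
      rw [Finset.sum_congr rfl fun k _ => prodeq k, ← Finset.mul_sum, ih p.2]
      have hc : ((2 * p.1).choose p.1 : ℝ) = 4 ^ p.1 * ascR ((1:ℝ)/2) p.1 / p.1.factorial := by
        have := central_eq p.1
        have hf : (p.1.factorial : ℝ) ≠ 0 := by exact_mod_cast p.1.factorial_ne_zero
        field_simp at this ⊢
        linarith [this]
      rw [hc, ← hp, pow_add]
      ring
    rw [Finset.sum_congr rfl step, ← Finset.mul_sum]
    have hv := vander ((1:ℝ)/2) ((m:ℝ)/2) n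
    rw [hv]
    have : (1:ℝ)/2 + (m:ℝ)/2 = ((m:ℕ)+1 : ℝ)/2 := by push_cast; ring_nf
    rw [this]
    push_cast
    ring

theorem sum_central_binomial_products (m n : ℕ) (hm : 1 ≤ m) (hn : 1 ≤ n) :
    ∑ k ∈ Finset.Nat.antidiagonalTuple m n,
      ∏ i, ((2 * k i).choose (k i) : ℝ) =
      4 ^ n / (n.factorial : ℝ) *
        (Real.Gamma ((n : ℝ) + (m : ℝ) / 2) / Real.Gamma ((m : ℝ) / 2)) := by
  have hm2 : (0:ℝ) < (m:ℝ)/2 := by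
    have : (0:ℝ) < (m:ℝ) := by exact_mod_cast Nat.lt_of_lt_of_le Nat.zero_lt_one hm
    linarith
  have hg := Gamma_add_nat ((m:ℝ)/2) hm2 n
  have hΓ : Real.Gamma ((m:ℝ)/2) ≠ 0 := (Real.Gamma_pos_of_pos hm2).ne'
  have hf : (n.factorial : ℝ) ≠ 0 := by exact_mod_cast n.factorial_ne_zero
  rw [key_lemma m n, show (n:ℝ) + (m:ℝ)/2 = (m:ℝ)/2 + n by ring, hg]
  field_simp
end

section
/- For every integer n ≥ 0, the convolution of central binomial coefficients satisfies ∑_{k=0}^{n} C(2k,k) · C(2n−2k, n−k) = 4^n. -/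
open Finset

private noncomputable def cb (k : ℕ) : ℚ := (Nat.centralBinom k : ℚ)

private noncomputable def bb (n : ℕ) : ℚ := ∑ k ∈ range (n + 1), cb k * cb (n - k)

private lemma cb_rec (k : ℕ) : ((k : ℚ) + 1) * cb (k + 1) = (4 * k + 2) * cb k := by
  have h := congrArg (Nat.cast : ℕ → ℚ) (Nat.succ_mul_centralBinom_succ k)
  push_cast at h
  unfold cb
  linear_combination h

private lemma sym (n : ℕ) :
    ∑ k ∈ range (n + 1), (k : ℚ) * (cb k * cb (n - k)) =
    ∑ k ∈ range (n + 1), ((n - k : ℕ) : ℚ) * (cb k * cb (n - k)) := by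
  rw [← Finset.sum_range_reflect (fun k => ((n - k : ℕ) : ℚ) * (cb k * cb (n - k))) (n + 1)]
  refine Finset.sum_congr rfl fun k hk => ?_
  rw [Finset.mem_range] at hk
  have h1 : n + 1 - 1 - k = n - k := by omega
  have h2 : n - (n - k) = k := by omega
  simp only [h1, h2]
  ring

private lemma twoSum (n : ℕ) :
    2 * ∑ k ∈ range (n + 1), (k : ℚ) * (cb k * cb (n - k)) = n * bb n := by
  rw [two_mul]
  nth_rewrite 2 [sym n]
  rw [← Finset.sum_add_distrib, bb, Finset.mul_sum]
  refine Finset.sum_congr rfl fun k hk => ?_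
  rw [Finset.mem_range] at hk
  have hnk : (k : ℚ) + ((n - k : ℕ) : ℚ) = n := by
    have : k + (n - k) = n := by omega
    exact_mod_cast congrArg (Nat.cast : ℕ → ℚ) this
  calc (k : ℚ) * (cb k * cb (n - k)) + ((n - k : ℕ) : ℚ) * (cb k * cb (n - k))
      = ((k : ℚ) + ((n - k : ℕ) : ℚ)) * (cb k * cb (n - k)) := by ring
    _ = (n : ℚ) * (cb k * cb (n - k)) := by rw [hnk]

private lemma bb_step (n : ℕ) : bb (n + 1) = 4 * bb n := by
  have h0 := twoSum n
  have h1 := twoSum (n + 1)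
  push_cast at h1
  have hs : ∑ k ∈ range (n + 1 + 1), (k : ℚ) * (cb k * cb (n + 1 - k)) =
      ∑ j ∈ range (n + 1), (4 * j + 2) * (cb j * cb (n - j)) := by
    rw [Finset.sum_range_succ']
    simp only [Nat.cast_zero, zero_mul, add_zero]
    refine Finset.sum_congr rfl fun j hj => ?_
    have h2 : n + 1 - (j + 1) = n - j := by omega
    have h3 := cb_rec j
    rw [h2]
    push_cast
    calc ((j : ℚ) + 1) * (cb (j + 1) * cb (n - j))
        = (((j : ℚ) + 1) * cb (j + 1)) * cb (n - j) := by ring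
      _ = ((4 * j + 2) * cb j) * cb (n - j) := by rw [h3]
      _ = (4 * (j : ℚ) + 2) * (cb j * cb (n - j)) := by ring
  have hexp : ∑ j ∈ range (n + 1), ((4 * j + 2) : ℚ) * (cb j * cb (n - j)) =
      4 * ∑ j ∈ range (n + 1), (j : ℚ) * (cb j * cb (n - j)) + 2 * bb n := by
    rw [bb, Finset.mul_sum, Finset.mul_sum, ← Finset.sum_add_distrib]
    exact Finset.sum_congr rfl fun j _ => by ring
  rw [hs, hexp] at h1
  have key : ((n : ℚ) + 1) * bb (n + 1) = ((n : ℚ) + 1) * (4 * bb n) := by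
    linear_combination -h1 + 4 * h0
  have hne : ((n : ℚ) + 1) ≠ 0 := by positivity
  exact mul_left_cancel₀ hne key

theorem central_binomial_convolution (n : ℕ) :
    ∑ k ∈ Finset.range (n + 1),
      (2 * k).choose k * (2 * n - 2 * k).choose (n - k) = 4 ^ n := by
  have hb : ∀ m, bb m = 4 ^ m := by
    intro m
    induction m with
    | zero => simp [bb, cb, Nat.centralBinom]
    | succ m ih => rw [bb_step, ih]; ring
  have hc : ((∑ k ∈ Finset.range (n + 1),
      (2 * k).choose k * (2 * n - 2 * k).choose (n - k) : ℕ) : ℚ) = bb n := by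
    push_cast
    rw [bb]
    refine Finset.sum_congr rfl fun k hk => ?_
    rw [Finset.mem_range] at hk
    have h1 : 2 * n - 2 * k = 2 * (n - k) := by omega
    rw [h1]
    rfl
  have := hc.trans (hb n)
  exact_mod_cast this
end
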